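/- Let k ∈ ℤ_{>0} and m₁, m₂ ∈ ℤ. Then Σ(2^k, −2^k; m₁,m₂) = 2^k·δ_{2|k}·( δ_{2^k | m₁}·2^k + δ_{2^k | m₂}·2^k − δ_{2^{k−1} | m₁}·2^{k−1} + ∑_{i=1}^{k−1} (−1)^i·g(2², m₁, 2^{k−i})·g(2², m₂, 2^i) + ∑_{i=1}^{k−1} δ_{2^{i−1} | m₂}·2^{i−1}·g(2², m₁, 2^{k−i}) ). -/

import Mathlib

/-- The Kronecker symbol at a prime `p`. -/
def kronPrime (a : ℤ) (p : ℕ) : ℤ :=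
  if p = 2 then (if a % 2 = 0 then 0 else if a % 8 = 1 ∨ a % 8 = 7 then 1 else -1)
  else jacobiSym a p

/-- The Kronecker symbol `(a/n)`. -/
def kron (a n : ℤ) : ℤ :=
  if n = 0 then (if a = 1 ∨ a = -1 then 1 else 0)
  else (if a < 0 ∧ n < 0 then -1 else 1) *
    n.natAbs.factorization.prod fun p e => kronPrime a p ^ e

/-- `e2pi r = exp(2πir)`. -/
noncomputable def e2pi (r : ℚ) : ℂ :=
  Complex.exp (2 * Real.pi * Complex.I * (r : ℂ))

/-- The set `S(A₁,A₂)` of normalized tuples `(B₁,C₁,B₂,C₂)` satisfying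
`A₁C₂ + 4B₁B₂ + C₁A₂ = 0`, the gcd conditions, `Cᵢ ≡ -1 (mod 4)` and the
normalization inequalities. -/
def PlSet (A₁ A₂ : ℤ) : Set (ℤ × ℤ × ℤ × ℤ) :=
  {v | A₁ * v.2.2.2 + 4 * v.1 * v.2.2.1 + v.2.1 * A₂ = 0 ∧
    Int.gcd A₁ (Int.gcd v.1 v.2.1) = 1 ∧
    Int.gcd A₂ (Int.gcd v.2.2.1 v.2.2.2) = 1 ∧
    v.2.1 ≡ -1 [ZMOD 4] ∧ v.2.2.2 ≡ -1 [ZMOD 4] ∧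
    0 ≤ (v.1 : ℚ) / (A₁ : ℚ) ∧ (v.1 : ℚ) / (A₁ : ℚ) < 1 ∧
    0 ≤ (v.2.2.1 : ℚ) / (A₂ : ℚ) ∧ (v.2.2.1 : ℚ) / (A₂ : ℚ) < 1 ∧
    0 ≤ (v.2.2.2 : ℚ) / (4 * (A₂ : ℚ)) ∧ (v.2.2.2 : ℚ) / (4 * (A₂ : ℚ)) < 1}

/-- The splitting `s` in Plücker coordinates. -/
def ssplit (A₁ A₂ : ℤ) (v : ℤ × ℤ × ℤ × ℤ) : ℤ :=
  let D : ℤ := Int.gcd A₁ A₂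
  let D₁ : ℤ := Int.gcd D v.1
  let D₂ : ℤ := D / D₁
  kron (kron (-1) (v.1 / D₁)) (-(A₁ * A₂)) * kron (A₁ / D) (A₂ / D) *
    kron (v.1 / D₁) (A₁ / D) * kron (4 * v.2.2.1 / D₂) (A₂.sign * A₂ / D) *
    kron D₁ v.2.1 * kron D₂ v.2.2.2

/-- The exponential sum `Σ(A₁,A₂;m₁,m₂)`. -/
noncomputable def SigmaExp (A₁ A₂ m₁ m₂ : ℤ) : ℂ :=
  ∑' v : ↥(PlSet A₁ A₂),
    (ssplit A₁ A₂ v.val : ℂ) *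
      e2pi ((m₁ : ℚ) * ((v.val.1 : ℚ) / (A₁ : ℚ)) + (m₂ : ℚ) * ((v.val.2.2.1 : ℚ) / (A₂ : ℚ)))

/-- The Gauss sum `g(p^j, m, p^t)`, summing over the units of `ℤ/p^tℤ`. -/
noncomputable def gaussG (p j : ℕ) (m : ℚ) (t : ℕ) : ℂ :=
  ∑ x ∈ Finset.filter (fun x => Nat.gcd x (p ^ t) = 1) (Finset.range (p ^ t)),
    (kron (x : ℤ) (p : ℤ) ^ j : ℂ) * e2pi (m * (x : ℚ) / ((p : ℚ) ^ t))

open Classical in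
/-- `delta P = 1` if `P` holds and `0` otherwise. -/
noncomputable def delta (P : Prop) : ℂ := if P then 1 else 0

/-!
Write `B₁ = b`, `B₂ = -β` and `C₂ = -(4t + 1)`. The equation together with `C₁ ≡ -1 (mod 4)`
forces `2^k ∣ bβ` and `C₁ = -(4(t + bβ/2^k) + 1)`, so `S(2^k, -2^k)` is parametrized by
`b, β, t < 2^k` with `2^k ∣ bβ`. For `b = 2^a u` with `u` odd the splitting is
`(-1)^(tk + (bβ/2^k) a)`, and the sum over `t` produces the factor `2^k δ_{2|k}`. For fixed `a`,
the sum over odd `u` is the Gauss sum `g(2², m₁, 2^(k-a))`, while `2^k ∣ bβ` means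
`β = 2^(k-a) y`, leaving `∑_{y < 2^a} (-1)^(ya) e(m₂ y / 2^a)`; splitting `y` by parity, this is
`δ_{2^(a-1) | m₂} 2^(a-1) + (-1)^a g(2², m₂, 2^a)`. The same parity split evaluates the Gauss
sums themselves, `g(2², m, 2^t) = δ_{2^t | m} 2^t - δ_{2^(t-1) | m} 2^(t-1)`, which handles
`a = 0`; the term `b = 0` contributes `δ_{2^k | m₂} 2^k`.
-/

open Finset

lemma kron_one_right (a : ℤ) : kron a 1 = 1 := by
  simp [kron]

lemma kron_one_left (n : ℤ) : kron 1 n = 1 := by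
  have hp : ∀ p : ℕ, kronPrime 1 p = 1 := fun p => by
    unfold kronPrime; split_ifs <;> simp_all
  simp [kron, hp]

lemma kron_eq_jacobiSym {a n : ℤ} (hsign : ¬(a < 0 ∧ n < 0)) (hn : Odd n) :
    kron a n = jacobiSym a n.natAbs := by
  have hn0 : n ≠ 0 := by rintro rfl; simp at hn
  have hodd : Odd n.natAbs := Int.natAbs_odd.mpr hn
  have hmul : ∀ x y : ℕ, x.Coprime y → jacobiSym a (x * y) = jacobiSym a x * jacobiSym a y := by
    intro x y hxy
    rcases Nat.eq_zero_or_pos x with rfl | hx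
    · obtain rfl : y = 1 := by simpa using hxy
      simp
    rcases Nat.eq_zero_or_pos y with rfl | hy
    · obtain rfl : x = 1 := by simpa using hxy
      simp
    have : NeZero x := ⟨hx.ne'⟩
    have : NeZero y := ⟨hy.ne'⟩
    exact jacobiSym.mul_right a x y
  rw [kron, if_neg hn0, if_neg hsign, one_mul,
    Nat.multiplicative_factorization (jacobiSym a ·) hmul (by simp) (by simpa using hn0)]
  refine Finsupp.prod_congr fun p hp => ?_
  have hp2 : p ≠ 2 := by
    rintro rfl
    exact Nat.not_even_iff_odd.mpr hodd (even_iff_two_dvd.mpr (Nat.dvd_of_mem_primeFactors hp))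
  rw [jacobiSym.pow_right, kronPrime, if_neg hp2]

lemma kron_two_pow_neg_four_mul_add_one (a t : ℕ) :
    kron (2 ^ a) (-(4 * t + 1)) = (-1) ^ (t * a) := by
  have hodd : Odd (4 * (t : ℤ) + 1) := ⟨2 * t, by ring⟩
  rw [kron_eq_jacobiSym (by simp) hodd.neg, Int.natAbs_neg,
    show (4 * (t : ℤ) + 1).natAbs = 4 * t + 1 by omega, jacobiSym.pow_left,
    jacobiSym.at_two ⟨2 * t, by ring⟩, ZMod.χ₈_nat_eq_if_mod_eight, pow_mul]
  rcases Nat.even_or_odd t with ⟨s, rfl⟩ | ⟨s, rfl⟩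
  · rw [if_neg (by omega), if_pos (by omega), Even.neg_one_pow ⟨s, rfl⟩]
  · rw [if_neg (by omega), if_neg (by omega), Odd.neg_one_pow ⟨s, rfl⟩]

lemma isUnit_kron_neg_one (n : ℤ) : IsUnit (kron (-1) n) := by
  have hp : ∀ p : ℕ, IsUnit (kronPrime (-1) p) := fun p => by
    rcases eq_or_ne p 2 with rfl | hp2
    · simp [kronPrime]
    · rw [kronPrime, if_neg hp2]
      exact Int.isUnit_iff.mpr (jacobiSym.eq_one_or_neg_one (by simp [Int.gcd]))
  have hprod : IsUnit (n.natAbs.factorization.prod fun p e => kronPrime (-1) p ^ e) :=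
    Finset.prod_induction _ IsUnit (fun _ _ => .mul) isUnit_one fun p _ => (hp p).pow _
  unfold kron
  split_ifs <;> simp_all

lemma kron_two_pow_of_isUnit {ε : ℤ} (hε : IsUnit ε) (m : ℕ) : kron ε (2 ^ m) = 1 := by
  rcases Int.isUnit_iff.mp hε with rfl | rfl <;>
  · rcases m.eq_zero_or_pos with rfl | hm
    · exact kron_one_right _
    simp [kron, Int.natAbs_pow, Nat.prime_two.factorization_pow, kronPrime]

lemma kron_sq_two_of_odd {x : ℤ} (hx : Odd x) : kron x 2 ^ 2 = 1 := by
  have : x % 2 = 1 := Int.odd_iff.mp hx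
  simp only [kron, show (2 : ℤ).natAbs = 2 ^ 1 from rfl, Nat.prime_two.factorization_pow]
  simp [kronPrime, this]

lemma e2pi_add (q r : ℚ) : e2pi (q + r) = e2pi q * e2pi r := by
  simp only [e2pi, ← Complex.exp_add, Rat.cast_add]
  ring_nf

lemma e2pi_eq_one_iff (q : ℚ) : e2pi q = 1 ↔ ∃ n : ℤ, q = n := by
  have h2πi : 2 * Real.pi * Complex.I ≠ 0 := by simp [Real.pi_ne_zero]
  rw [e2pi, Complex.exp_eq_one_iff]
  refine exists_congr fun n => ?_
  rw [mul_comm (n : ℂ), mul_right_inj' h2πi]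
  norm_cast

lemma e2pi_intCast (n : ℤ) : e2pi n = 1 :=
  (e2pi_eq_one_iff _).mpr ⟨n, rfl⟩

lemma e2pi_zero : e2pi 0 = 1 := by
  simp [e2pi]

lemma e2pi_natCast_mul (n : ℕ) (q : ℚ) : e2pi (n * q) = e2pi q ^ n := by
  induction n with
  | zero => simp [e2pi_zero]
  | succ n ih => rw [pow_succ, ← ih, ← e2pi_add]; push_cast; ring_nf

lemma sum_range_e2pi (m : ℤ) {T : ℕ} (hT : 0 < T) :
    ∑ y ∈ range T, e2pi (m * y / T) = delta ((T : ℤ) ∣ m) * T := by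
  have hTq : (T : ℚ) ≠ 0 := by positivity
  have hpow : ∀ y : ℕ, e2pi (m * y / T) = e2pi (m / T) ^ y := fun y => by
    rw [← e2pi_natCast_mul]; ring_nf
  simp only [hpow, delta]
  split_ifs with hdvd
  · obtain ⟨c, rfl⟩ := hdvd
    simp [hTq, e2pi_intCast]
  · have hne : e2pi (m / T) ≠ 1 := by
      rw [Ne, e2pi_eq_one_iff]
      rintro ⟨n, hn⟩
      exact hdvd ⟨n, by rw [div_eq_iff hTq] at hn; exact_mod_cast hn.trans (mul_comm _ _)⟩
    have hT : e2pi (m / T) ^ T = 1 := by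
      rw [← e2pi_natCast_mul, mul_div_cancel₀ _ hTq, e2pi_intCast]
    rw [geom_sum_eq hne, hT, sub_self, zero_div, zero_mul]

lemma sum_range_e2pi_two_pow (m : ℤ) (t : ℕ) :
    ∑ y ∈ range (2 ^ t), e2pi (m * y / 2 ^ t) = delta ((2 : ℤ) ^ t ∣ m) * 2 ^ t := by
  exact_mod_cast sum_range_e2pi m (T := 2 ^ t) (by positivity)

section DyadicSums

variable {M : Type*} [AddCommMonoid M]

lemma sum_filter_dvd_range_mul {n : ℕ} (hn : 0 < n) (m : ℕ) (f : ℕ → M) :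
    ∑ x ∈ (range (n * m)).filter (n ∣ ·), f x = ∑ y ∈ range m, f (n * y) := by
  symm
  refine sum_nbij (n * ·) (fun y hy => ?_) (fun y _ z _ h => Nat.eq_of_mul_eq_mul_left hn h)
    (fun x hx => ?_) fun _ _ => rfl
  · simp only [mem_filter, mem_range] at hy ⊢
    exact ⟨Nat.mul_lt_mul_of_pos_left hy hn, dvd_mul_right n y⟩
  · simp only [coe_filter, mem_range] at hx
    obtain ⟨hlt, y, rfl⟩ := hx
    exact ⟨y, by simpa using lt_of_mul_lt_mul_left hlt, rfl⟩

lemma sum_range_two_mul (n : ℕ) (f : ℕ → M) :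
    ∑ x ∈ range (2 * n), f x =
      ∑ x ∈ (range (2 * n)).filter Odd, f x + ∑ y ∈ range n, f (2 * y) := by
  rw [← sum_filter_add_sum_filter_not _ Odd, ← sum_filter_dvd_range_mul two_pos]
  simp only [Nat.not_odd_iff_even, even_iff_two_dvd]

lemma sum_range_two_pow (k : ℕ) (f : ℕ → M) :
    ∑ b ∈ range (2 ^ k), f b =
      f 0 + ∑ a ∈ range k, ∑ u ∈ (range (2 ^ (k - a))).filter Odd, f (2 ^ a * u) := by
  induction k generalizing f with
  | zero => simp
  | succ k ih =>
    rw [pow_succ', sum_range_two_mul, ih, sum_range_succ', add_comm, add_assoc]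
    congr 2
    · exact sum_congr rfl fun a _ => by simp only [Nat.add_sub_add_right, pow_succ', mul_assoc]
    · simp [pow_succ']

end DyadicSums

lemma gaussG_two_two_eq_sum_odd (m : ℚ) {t : ℕ} (ht : 1 ≤ t) :
    gaussG 2 2 m t = ∑ x ∈ (range (2 ^ t)).filter Odd, e2pi (m * x / 2 ^ t) := by
  have hcop : ∀ x, Nat.gcd x (2 ^ t) = 1 ↔ Odd x := fun x => by
    rw [← Nat.coprime_iff_gcd_eq_one, Nat.coprime_pow_right_iff ht, Nat.coprime_two_right]
  rw [gaussG, filter_congr fun x _ => hcop x]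
  refine sum_congr rfl fun x hx => ?_
  have hsq := kron_sq_two_of_odd ((Int.odd_coe_nat x).mpr (mem_filter.mp hx).2)
  rw [← Int.cast_pow, Nat.cast_ofNat, hsq, Int.cast_one, one_mul, Nat.cast_ofNat]

lemma gaussG_two_two (m : ℤ) {t : ℕ} (ht : 1 ≤ t) :
    gaussG 2 2 m t =
      delta ((2 : ℤ) ^ t ∣ m) * 2 ^ t - delta ((2 : ℤ) ^ (t - 1) ∣ m) * 2 ^ (t - 1) := by
  obtain ⟨s, rfl⟩ := Nat.exists_eq_add_of_le' ht
  have hsplit := sum_range_two_mul (2 ^ s) fun y => e2pi (m * y / 2 ^ (s + 1))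
  rw [← pow_succ', sum_range_e2pi_two_pow, ← gaussG_two_two_eq_sum_odd _ ht] at hsplit
  have heven : ∀ y : ℕ, e2pi (m * (2 * y : ℕ) / 2 ^ (s + 1)) = e2pi (m * y / 2 ^ s) :=
    fun y => by congr 1; push_cast; ring
  rw [sum_congr rfl fun y _ => heven y, sum_range_e2pi_two_pow] at hsplit
  rw [Nat.add_sub_cancel, hsplit, add_sub_cancel_right]

lemma sum_range_neg_one_pow_mul_e2pi (m : ℤ) {a : ℕ} (ha : 1 ≤ a) :
    ∑ y ∈ range (2 ^ a), (-1 : ℂ) ^ (y * a) * e2pi (m * y / 2 ^ a) =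
      delta ((2 : ℤ) ^ (a - 1) ∣ m) * 2 ^ (a - 1) + (-1) ^ a * gaussG 2 2 m a := by
  obtain ⟨s, rfl⟩ := Nat.exists_eq_add_of_le' ha
  have hodd : ∀ y ∈ (range (2 ^ (s + 1))).filter Odd,
      (-1 : ℂ) ^ (y * (s + 1)) * e2pi (m * y / 2 ^ (s + 1)) =
        (-1) ^ (s + 1) * e2pi (m * y / 2 ^ (s + 1)) := fun y hy => by
    rw [pow_mul, (mem_filter.mp hy).2.neg_one_pow]
  have heven : ∀ y : ℕ,
      (-1 : ℂ) ^ (2 * y * (s + 1)) * e2pi (m * (2 * y : ℕ) / 2 ^ (s + 1)) =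
        e2pi (m * y / 2 ^ s) := fun y => by
    rw [mul_assoc, pow_mul, neg_one_sq, one_pow, one_mul]
    congr 1; push_cast; ring
  rw [pow_succ', sum_range_two_mul, ← pow_succ', sum_congr rfl hodd, ← mul_sum,
    ← gaussG_two_two_eq_sum_odd _ ha, sum_congr rfl fun y _ => heven y, sum_range_e2pi_two_pow,
    Nat.add_sub_cancel, add_comm]

lemma sum_range_two_pow_neg_one_pow_mul (k : ℕ) :
    ∑ t ∈ range (2 ^ k), (-1 : ℂ) ^ (t * k) = delta (2 ∣ k) * 2 ^ k := by
  simp only [pow_mul', delta]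
  split_ifs with hk
  · simp [(even_iff_two_dvd.mpr hk).neg_one_pow]
  · have hk' : 0 < k := Nat.pos_of_ne_zero (by rintro rfl; exact hk (dvd_zero 2))
    rw [(Nat.odd_iff.mpr (Nat.two_dvd_ne_zero.mp hk)).neg_one_pow, neg_one_geom_sum,
      if_pos ((Nat.even_pow' hk'.ne').mpr even_two), zero_mul]

lemma ssplit_two_pow_neg {k a : ℕ} {b : ℤ} (hak : a ≤ k) (hgcd : Int.gcd (2 ^ k) b = 2 ^ a)
    (β : ℤ) (t c : ℕ) :
    ssplit (2 ^ k) (-2 ^ k) (b, -(4 * (t + c) + 1), β, -(4 * t + 1)) =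
      (-1) ^ ((t + c) * a + t * (k - a)) := by
  have h2k : (2 : ℤ) ^ k ≠ 0 := by positivity
  have hsplit : (2 : ℤ) ^ k = 2 ^ a * 2 ^ (k - a) := by rw [← pow_add, Nat.add_sub_cancel' hak]
  have hD : ((Int.gcd (2 ^ k) (-2 ^ k) : ℕ) : ℤ) = 2 ^ k := by simp [Int.natAbs_pow]
  have hD₁ : ((Int.gcd ((2 : ℤ) ^ k) b : ℕ) : ℤ) = 2 ^ a := by rw [hgcd]; push_cast; rfl
  have hD₂ : (2 : ℤ) ^ k / 2 ^ a = 2 ^ (k - a) := by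
    rw [hsplit, Int.mul_ediv_cancel_left _ (by positivity)]
  have hsign : (-(2 : ℤ) ^ k).sign * -2 ^ k / 2 ^ k = 1 := by
    rw [Int.sign_neg, Int.sign_eq_one_of_pos (by positivity), neg_mul_neg, one_mul,
      Int.ediv_self h2k]
  have hneg : -(2 : ℤ) ^ k / 2 ^ k = -1 := by rw [Int.neg_ediv_of_dvd dvd_rfl, Int.ediv_self h2k]
  have hprod : -((2 : ℤ) ^ k * -2 ^ k) = 2 ^ (k + k) := by ring
  simp only [ssplit, hD, hD₁, hD₂, hsign, hneg, hprod, Int.ediv_self h2k, ← Nat.cast_add,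
    kron_two_pow_of_isUnit (isUnit_kron_neg_one _), kron_one_left, kron_one_right,
    kron_two_pow_neg_four_mul_add_one]
  ring

lemma gcd_eq_one_of_natAbs_eq_two_pow {A C : ℤ} {k : ℕ} (hA : A.natAbs = 2 ^ k) (hC : Odd C)
    (B : ℤ) : Int.gcd A (Int.gcd B C) = 1 := by
  have hodd : Odd (Int.gcd B C) :=
    (Int.natAbs_odd.mpr hC).of_dvd_nat (Int.gcd_dvd_natAbs_right B C)
  rw [Int.gcd, hA, Int.natAbs_natCast]
  exact Nat.Coprime.pow_left k (Nat.coprime_two_left.mpr hodd)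

lemma mem_plSet_two_pow_neg_iff {k : ℕ} {B₁ C₁ B₂ C₂ : ℤ} :
    (B₁, C₁, B₂, C₂) ∈ PlSet (2 ^ k) (-2 ^ k) ↔
      2 ^ k * (C₂ - C₁) + 4 * B₁ * B₂ = 0 ∧ C₁ ≡ -1 [ZMOD 4] ∧ C₂ ≡ -1 [ZMOD 4] ∧
        0 ≤ B₁ ∧ B₁ < 2 ^ k ∧ 0 ≤ -B₂ ∧ -B₂ < 2 ^ k ∧ 0 ≤ -C₂ ∧ -C₂ < 4 * 2 ^ k := by
  have hA : (0 : ℚ) < ((2 ^ k : ℤ) : ℚ) := by positivity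
  have hA₄ : (0 : ℚ) < ((4 * 2 ^ k : ℤ) : ℚ) := by positivity
  have hB₂ : (B₂ : ℚ) / ((-2 ^ k : ℤ) : ℚ) = (-B₂ : ℤ) / ((2 ^ k : ℤ) : ℚ) := by
    push_cast; ring
  have hC₂ : (C₂ : ℚ) / (4 * ((-2 ^ k : ℤ) : ℚ)) = (-C₂ : ℤ) / ((4 * 2 ^ k : ℤ) : ℚ) := by
    push_cast; ring
  simp only [PlSet, Set.mem_ofPred_eq, hB₂, hC₂, le_div_iff₀ hA, le_div_iff₀ hA₄, div_lt_one hA,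
    div_lt_one hA₄, zero_mul, Int.cast_nonneg_iff, Int.cast_lt]
  constructor
  · rintro ⟨heq, -, -, hC₁, hC₂, hB⟩
    exact ⟨by linear_combination heq, hC₁, hC₂, hB⟩
  · rintro ⟨heq, hC₁, hC₂, hB⟩
    have hodd : ∀ {C : ℤ}, C ≡ -1 [ZMOD 4] → Odd C := fun h =>
      Int.odd_iff.mpr (by unfold Int.ModEq at h; omega)
    exact ⟨by linear_combination heq,
      gcd_eq_one_of_natAbs_eq_two_pow (k := k) (by simp) (hodd hC₁) _,
      gcd_eq_one_of_natAbs_eq_two_pow (k := k) (by simp) (hodd hC₂) _, hC₁, hC₂, hB⟩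

def plPairs (k : ℕ) : Finset (ℕ × ℕ) :=
  (range (2 ^ k) ×ˢ range (2 ^ k)).filter fun p => 2 ^ k ∣ p.1 * p.2

def plParam (k : ℕ) : (ℕ × ℕ) × ℕ → ℤ × ℤ × ℤ × ℤ
  | ((b, β), t) => (b, -(4 * (t + (b * β / 2 ^ k : ℕ)) + 1), -β, -(4 * t + 1))

lemma plParam_injective (k : ℕ) : Function.Injective (plParam k) := by
  rintro ⟨⟨b, β⟩, t⟩ ⟨⟨b', β'⟩, t'⟩ h
  simp only [plParam, Prod.mk.injEq] at h ⊢
  omega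

lemma plSet_two_pow_neg_eq_image (k : ℕ) :
    PlSet (2 ^ k) (-2 ^ k) = ((plPairs k ×ˢ range (2 ^ k)).image (plParam k) : Set _) := by
  have h2k : (0 : ℤ) < 2 ^ k := by positivity
  ext ⟨B₁, C₁, B₂, C₂⟩
  rw [mem_plSet_two_pow_neg_iff, coe_image, Set.mem_image]
  constructor
  · rintro ⟨heq, hC₁, hC₂, hB₁, hB₁', hB₂, hB₂', hC, hC'⟩
    lift B₁ to ℕ using hB₁ with b
    obtain ⟨β, hβ⟩ := Int.eq_ofNat_of_zero_le hB₂
    obtain ⟨t, rfl⟩ : ∃ t : ℕ, C₂ = -(4 * t + 1) :=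
      ⟨((-C₂ - 1) / 4).toNat, by unfold Int.ModEq at hC₂; omega⟩
    obtain ⟨d, hd⟩ := (hC₁.trans hC₂.symm).dvd
    have hbβ : ((b * β : ℕ) : ℤ) = ((2 ^ k : ℕ) : ℤ) * d := by
      push_cast
      exact mul_left_cancel₀ four_ne_zero
        (by linear_combination -heq + 2 ^ k * hd - 4 * b * hβ)
    have hc : ((b * β / 2 ^ k : ℕ) : ℤ) = d := by
      rw [Int.natCast_div, hbβ, Int.mul_ediv_cancel_left _ (by positivity)]
    refine ⟨((b, β), t), ?_, ?_⟩
    · simp only [mem_coe, plPairs, mem_product, mem_filter, mem_range]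
      refine ⟨⟨⟨by exact_mod_cast hB₁', by exact_mod_cast hβ ▸ hB₂'⟩,
        Int.natCast_dvd_natCast.mp ⟨d, hbβ⟩⟩,
        by exact_mod_cast (by linarith : (t : ℤ) < 2 ^ k)⟩
    · simp only [plParam, Prod.mk.injEq, hc, true_and, and_true]
      constructor <;> linarith
  · rintro ⟨⟨⟨b, β⟩, t⟩, hx, hv⟩
    simp only [plParam, Prod.mk.injEq] at hv
    obtain ⟨rfl, rfl, rfl, rfl⟩ := hv
    simp only [mem_coe, plPairs, mem_product, mem_filter, mem_range] at hx
    obtain ⟨⟨⟨hb, hβ⟩, hdvd⟩, ht⟩ := hx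
    have hc : (2 ^ k : ℤ) * (b * β / 2 ^ k : ℕ) = b * β := by
      exact_mod_cast Nat.mul_div_cancel' hdvd
    refine ⟨by linear_combination 4 * hc, ?_, ?_, by positivity, by exact_mod_cast hb, by simp,
      by simpa using (by exact_mod_cast hβ : (β : ℤ) < 2 ^ k), by omega, ?_⟩
    · unfold Int.ModEq; omega
    · unfold Int.ModEq; omega
    · linarith [(by exact_mod_cast ht : (t : ℤ) < 2 ^ k)]

lemma factorization_two_pow_mul_odd {a u : ℕ} (hu : Odd u) :
    (2 ^ a * u).factorization 2 = a := by
  rw [Nat.factorization_mul (by positivity) hu.pos.ne', Finsupp.add_apply,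
    Nat.prime_two.factorization_pow, Finsupp.single_eq_same,
    Nat.factorization_eq_zero_of_not_dvd hu.not_two_dvd_nat, add_zero]

lemma gcd_two_pow_two_pow_mul_odd {k a u : ℕ} (hak : a ≤ k) (hu : Odd u) :
    Int.gcd (2 ^ k) (2 ^ a * u : ℕ) = 2 ^ a := by
  rw [show (2 : ℤ) ^ k = (2 ^ k : ℕ) by push_cast; rfl, Int.gcd_natCast_natCast,
    ← Nat.add_sub_cancel' hak, pow_add, Nat.gcd_mul_left,
    Nat.Coprime.pow_left _ (Nat.coprime_two_left.mpr hu), mul_one]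

lemma ssplit_plParam {k b : ℕ} (hb : b < 2 ^ k) (β t : ℕ) :
    ssplit (2 ^ k) (-2 ^ k) (plParam k ((b, β), t)) =
      (-1) ^ (t * k) * (-1) ^ (b * β / 2 ^ k * b.factorization 2) := by
  rcases eq_or_ne b 0 with rfl | hb0
  · -- `D₁ = gcd(2^k, 0) = 2^k`, so `b = 0` behaves like `a = k`
    simpa [plParam] using
      ssplit_two_pow_neg (b := 0) le_rfl (by simp [Int.natAbs_pow]) (-β) t 0
  obtain ⟨a, u, hu, rfl⟩ := Nat.exists_eq_two_pow_mul_odd hb0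
  have hak : a < k := (Nat.pow_lt_pow_iff_right one_lt_two).mp
    ((Nat.le_mul_of_pos_right _ hu.pos).trans_lt hb)
  rw [plParam, ssplit_two_pow_neg hak.le (gcd_two_pow_two_pow_mul_odd hak.le hu),
    factorization_two_pow_mul_odd hu, ← pow_add,
    show t * k = t * a + t * (k - a) by rw [← mul_add, Nat.add_sub_cancel' hak.le]]
  ring_nf

noncomputable def pairWeight (k : ℕ) (m₁ m₂ : ℤ) (p : ℕ × ℕ) : ℂ :=
  (-1) ^ (p.1 * p.2 / 2 ^ k * p.1.factorization 2) * e2pi (m₁ * p.1 / 2 ^ k) *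
    e2pi (m₂ * p.2 / 2 ^ k)

lemma sigmaExp_eq_sum_of_plSet_eq {A₁ A₂ : ℤ} {s : Finset (ℤ × ℤ × ℤ × ℤ)}
    (hs : PlSet A₁ A₂ = s) (m₁ m₂ : ℤ) :
    SigmaExp A₁ A₂ m₁ m₂ =
      ∑ v ∈ s, (ssplit A₁ A₂ v : ℂ) * e2pi (m₁ * (v.1 / A₁) + m₂ * (v.2.2.1 / A₂)) := by
  rw [SigmaExp, hs]
  exact Finset.tsum_subtype' s fun v =>
    (ssplit A₁ A₂ v : ℂ) * e2pi (m₁ * (v.1 / A₁) + m₂ * (v.2.2.1 / A₂))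

lemma sigmaExp_two_pow_neg (k : ℕ) (m₁ m₂ : ℤ) :
    SigmaExp (2 ^ k) (-2 ^ k) m₁ m₂ =
      (∑ t ∈ range (2 ^ k), (-1 : ℂ) ^ (t * k)) * ∑ p ∈ plPairs k, pairWeight k m₁ m₂ p := by
  rw [sigmaExp_eq_sum_of_plSet_eq (plSet_two_pow_neg_eq_image k),
    sum_image fun x _ y _ h => plParam_injective k h, sum_product, mul_sum]
  refine sum_congr rfl fun ⟨b, β⟩ hp => ?_
  rw [sum_mul]
  refine sum_congr rfl fun t _ => ?_
  have hb : b < 2 ^ k := by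
    simp only [plPairs, mem_filter, mem_product, mem_range] at hp
    exact hp.1.1
  have harg : (m₁ : ℚ) * (((b : ℤ) : ℚ) / ((2 ^ k : ℤ) : ℚ)) +
      m₂ * (((-β : ℤ) : ℚ) / ((-2 ^ k : ℤ) : ℚ)) = m₁ * b / 2 ^ k + m₂ * β / 2 ^ k := by
    push_cast; ring
  rw [ssplit_plParam hb]
  simp only [plParam, harg, pairWeight, mul_assoc, ← e2pi_add]
  push_cast
  ring

lemma sum_pairWeight_two_pow_mul_odd {k a u : ℕ} (ha : a < k) (hu : Odd u) (m₁ m₂ : ℤ) :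
    ∑ β ∈ range (2 ^ k),
        (if 2 ^ k ∣ 2 ^ a * u * β then pairWeight k m₁ m₂ (2 ^ a * u, β) else 0) =
      e2pi (m₁ * u / 2 ^ (k - a)) *
        ∑ y ∈ range (2 ^ a), (-1 : ℂ) ^ (y * a) * e2pi (m₂ * y / 2 ^ a) := by
  have hk : 2 ^ k = 2 ^ (k - a) * 2 ^ a := by rw [← pow_add, Nat.sub_add_cancel ha.le]
  have hkq : (2 : ℚ) ^ k = 2 ^ (k - a) * 2 ^ a := by exact_mod_cast hk
  have hdvd : ∀ β, 2 ^ k ∣ 2 ^ a * u * β ↔ 2 ^ (k - a) ∣ β := fun β => by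
    rw [hk, mul_comm (2 ^ (k - a)), mul_assoc, Nat.mul_dvd_mul_iff_left (by positivity)]
    exact (Nat.Coprime.pow_left _ (Nat.coprime_two_left.mpr hu)).dvd_mul_left
  have hquot : ∀ y, 2 ^ a * u * (2 ^ (k - a) * y) / 2 ^ k = u * y := fun y => by
    rw [hk, show 2 ^ a * u * (2 ^ (k - a) * y) = 2 ^ (k - a) * 2 ^ a * (u * y) by ring,
      Nat.mul_div_cancel_left _ (by positivity)]
  simp only [hdvd]
  rw [← sum_filter, hk, sum_filter_dvd_range_mul (by positivity), mul_sum]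
  refine sum_congr rfl fun y _ => ?_
  dsimp only [pairWeight]
  rw [hquot, factorization_two_pow_mul_odd hu, mul_assoc u, pow_mul, hu.neg_one_pow]
  have h₁ : (m₁ : ℚ) * (2 ^ a * u : ℕ) / 2 ^ k = m₁ * u / 2 ^ (k - a) := by
    rw [hkq]; push_cast; field_simp
  have h₂ : (m₂ : ℚ) * (2 ^ (k - a) * y : ℕ) / 2 ^ k = m₂ * y / 2 ^ a := by
    rw [hkq]; push_cast; field_simp
  rw [h₁, h₂]
  ring

lemma sum_pairWeight (k : ℕ) (m₁ m₂ : ℤ) :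
    ∑ p ∈ plPairs k, pairWeight k m₁ m₂ p =
      delta ((2 : ℤ) ^ k ∣ m₂) * 2 ^ k +
        ∑ a ∈ range k, gaussG 2 2 m₁ (k - a) *
          ∑ y ∈ range (2 ^ a), (-1 : ℂ) ^ (y * a) * e2pi (m₂ * y / 2 ^ a) := by
  rw [plPairs, sum_filter, sum_product, sum_range_two_pow]
  congr 1
  · simpa [pairWeight, e2pi_zero] using sum_range_e2pi_two_pow m₂ k
  · refine sum_congr rfl fun a ha => ?_
    rw [sum_congr rfl fun u hu =>
        sum_pairWeight_two_pow_mul_odd (mem_range.1 ha) (mem_filter.1 hu).2 m₁ m₂,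
      ← sum_mul, gaussG_two_two_eq_sum_odd _ (Nat.sub_pos_of_lt (mem_range.1 ha))]

/-- Evaluation of `Σ(2^k, -2^k; m₁, m₂)`. -/
theorem sigma_equal_two_powers_neg (k : ℕ) (hk : 0 < k) (m₁ m₂ : ℤ) :
    SigmaExp ((2 : ℤ) ^ k) (-(2 : ℤ) ^ k) m₁ m₂ =
      (2 : ℂ) ^ k * delta (2 ∣ k) *
        (delta ((2 : ℤ) ^ k ∣ m₁) * (2 : ℂ) ^ k + delta ((2 : ℤ) ^ k ∣ m₂) * (2 : ℂ) ^ k -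
          delta ((2 : ℤ) ^ (k - 1) ∣ m₁) * (2 : ℂ) ^ (k - 1) +
          (∑ i ∈ Finset.Ico 1 k, (-1 : ℂ) ^ i * gaussG 2 2 m₁ (k - i) * gaussG 2 2 m₂ i) +
          ∑ i ∈ Finset.Ico 1 k,
            delta ((2 : ℤ) ^ (i - 1) ∣ m₂) * (2 : ℂ) ^ (i - 1) * gaussG 2 2 m₁ (k - i)) := by
  have hterm : ∀ a ∈ Ico 1 k, gaussG 2 2 m₁ (k - a) *
      ∑ y ∈ range (2 ^ a), (-1 : ℂ) ^ (y * a) * e2pi (m₂ * y / 2 ^ a) =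
        (-1) ^ a * gaussG 2 2 m₁ (k - a) * gaussG 2 2 m₂ a +
          delta ((2 : ℤ) ^ (a - 1) ∣ m₂) * 2 ^ (a - 1) * gaussG 2 2 m₁ (k - a) := fun a ha => by
    rw [sum_range_neg_one_pow_mul_e2pi m₂ (mem_Ico.1 ha).1]
    ring
  rw [sigmaExp_two_pow_neg, sum_range_two_pow_neg_one_pow_mul, sum_pairWeight, range_eq_Ico,
    sum_eq_sum_Ico_succ_bot hk, sum_congr rfl hterm, sum_add_distrib, Nat.sub_zero,
    gaussG_two_two m₁ hk]
  simp only [pow_zero, sum_range_one, mul_zero, Nat.cast_zero, zero_div, e2pi_zero, mul_one]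
  ring
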